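/- arXiv:2111.08308 — 3 statements merged into one kernel-verified Lean document; each statement's English description precedes it below -/
import Mathlib

section
/- For integers $1 \le \ell \le q \le d/2$, the number of subsets $S \subseteq \mathbb{Z}/d\mathbb{Z}$ of size $\ell$ whose cyclic diameter $\gamma(S)$ is at most $q$ equals $d \binom{q-1}{\ell-1}$. -/
/-- The cyclic interval of length `m` starting at `a` in `ZMod d`. -/
def cycInterval (d : ℕ) (a : ZMod d) (m : ℕ) : Finset (ZMod d) :=
  (Finset.range m).image (fun t : ℕ => (a + (t : ZMod d)))

/-- The cyclic diameter of `S ⊆ ZMod d`: the size of the smallest cyclic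
interval containing `S`. -/
noncomputable def cycDiam (d : ℕ) (S : Finset (ZMod d)) : ℕ :=
  sInf {m : ℕ | ∃ a : ZMod d, S ⊆ cycInterval d a m}

lemma mem_cycInterval {d : ℕ} {a x : ZMod d} {m : ℕ} :
    x ∈ cycInterval d a m ↔ ∃ t, t < m ∧ x = a + (t : ℕ) := by
  simp [cycInterval, eq_comm, and_comm]

/-- For `1 ≤ ℓ ≤ q ≤ d/2`, the number of subsets `S ⊆ ℤ/dℤ` of size `ℓ`
with cyclic diameter at most `q` equals `d * C(q-1, ℓ-1)`. -/
theorem card_subsets_diam_le (d q ℓ : ℕ) (hℓ : 1 ≤ ℓ) (hq : ℓ ≤ q)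
    (hd : 2 * q ≤ d) :
    Nat.card {S : Finset (ZMod d) // S.card = ℓ ∧ cycDiam d S ≤ q} =
      d * Nat.choose (q - 1) (ℓ - 1) := by
  classical
  haveI : NeZero d := ⟨by omega⟩
  have hqd : q < d := by omega
  -- casting is injective below d
  have hcast : ∀ {s t : ℕ}, s < d → t < d → (s : ZMod d) = (t : ZMod d) → s = t := by
    intro s t hs ht h
    have := congrArg ZMod.val h
    rwa [ZMod.val_natCast_of_lt hs, ZMod.val_natCast_of_lt ht] at this
  have hvalcast : ∀ x : ZMod d, ((x.val : ℕ) : ZMod d) = x :=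
    fun x => ZMod.natCast_rightInverse x
  rw [Nat.card_eq_fintype_card, Fintype.card_subtype]
  set A : Finset (Finset (ZMod d)) :=
    Finset.univ.filter (fun S => S.card = ℓ ∧ cycDiam d S ≤ q) with hA
  set B : Finset (ZMod d × Finset ℕ) :=
    (Finset.univ : Finset (ZMod d)) ×ˢ (Finset.Icc 1 (q - 1)).powersetCard (ℓ - 1) with hB
  have hBcard : B.card = d * Nat.choose (q - 1) (ℓ - 1) := by
    rw [hB, Finset.card_product, Finset.card_univ, ZMod.card,
      Finset.card_powersetCard, Nat.card_Icc]
    rfl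
  rw [← hBcard]
  -- the map from pairs to sets
  set f : ZMod d × Finset ℕ → Finset (ZMod d) :=
    fun p => insert p.1 (p.2.image (fun t : ℕ => p.1 + (t : ZMod d))) with hf
  have hmemB : ∀ p ∈ B, p.2 ⊆ Finset.Icc 1 (q - 1) ∧ p.2.card = ℓ - 1 := by
    intro p hp
    rw [hB, Finset.mem_product, Finset.mem_powersetCard] at hp
    exact hp.2
  -- elements of f p have small offsets
  have hoff : ∀ p ∈ B, ∀ x ∈ f p, ∃ t, t < q ∧ x = p.1 + (t : ℕ) := by
    intro p hp x hx
    rw [hf, Finset.mem_insert] at hx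
    rcases hx with rfl | hx
    · exact ⟨0, by omega, by simp⟩
    · obtain ⟨t, ht, rfl⟩ := Finset.mem_image.mp hx
      have := Finset.mem_Icc.mp ((hmemB p hp).1 ht)
      exact ⟨t, by omega, rfl⟩
  symm
  apply Finset.card_bij (fun p _ => f p)
  · -- maps into A
    intro p hp
    obtain ⟨hsub, hcard⟩ := hmemB p hp
    have hnotmem : p.1 ∉ p.2.image (fun t : ℕ => p.1 + (t : ZMod d)) := by
      intro h
      obtain ⟨t, ht, h⟩ := Finset.mem_image.mp h
      have htq := Finset.mem_Icc.mp (hsub ht)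
      have : (t : ZMod d) = ((0 : ℕ) : ZMod d) := by
        have := h.symm
        simpa using this
      have := hcast (by omega) (by omega) this
      omega
    rw [hA, Finset.mem_filter]
    refine ⟨Finset.mem_univ _, ?_, ?_⟩
    · rw [hf]
      rw [Finset.card_insert_of_notMem hnotmem,
        Finset.card_image_of_injOn, hcard]
      · omega
      · intro s hs t ht hst
        have hsq := Finset.mem_Icc.mp (hsub hs)
        have htq := Finset.mem_Icc.mp (hsub ht)
        exact hcast (by omega) (by omega) (by simpa using hst)
    · apply Nat.sInf_le
      refine ⟨p.1, fun x hx => ?_⟩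
      obtain ⟨t, ht, rfl⟩ := hoff p hp x hx
      exact mem_cycInterval.mpr ⟨t, ht, rfl⟩
  · -- injective
    intro p hp p' hp' heq
    -- first components equal
    have h1 : p.1 = p'.1 := by
      have hx : p'.1 ∈ f p := by
        rw [heq, hf]; exact Finset.mem_insert_self _ _
      have hy : p.1 ∈ f p' := by
        rw [← heq, hf]; exact Finset.mem_insert_self _ _
      obtain ⟨t, ht, h1⟩ := hoff p hp _ hx
      obtain ⟨s, hs, h2⟩ := hoff p' hp' _ hy
      rw [h1] at h2
      have : ((t + s : ℕ) : ZMod d) = ((0 : ℕ) : ZMod d) := by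
        have : p.1 + ((t : ZMod d) + (s : ZMod d)) = p.1 + 0 := by
          rw [← add_assoc, ← h2, add_zero]
        push_cast
        exact add_left_cancel this
      have := hcast (by omega) (by omega) this
      have ht0 : t = 0 := by omega
      rw [h1, ht0]; simp
    have h2 : p.2 = p'.2 := by
      have key : ∀ r r' : ZMod d × Finset ℕ, r ∈ B → r' ∈ B → f r = f r' →
          r.1 = r'.1 → r.2 ⊆ r'.2 := by
        intro r r' hr hr' heq h1 t ht
        have hsub := (hmemB r hr).1
        have hsub' := (hmemB r' hr').1
        have htq := Finset.mem_Icc.mp (hsub ht)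
        have hmem : r.1 + (t : ZMod d) ∈ f r' := by
          rw [← heq, hf]
          exact Finset.mem_insert_of_mem (Finset.mem_image_of_mem _ ht)
        rw [hf, Finset.mem_insert] at hmem
        rcases hmem with h | h
        · exfalso
          rw [h1] at h
          have : (t : ZMod d) = ((0 : ℕ) : ZMod d) := by
            simpa using h.symm
          have := hcast (by omega) (by omega) this
          omega
        · obtain ⟨s, hs, h⟩ := Finset.mem_image.mp h
          have hsq := Finset.mem_Icc.mp (hsub' hs)
          rw [h1] at h
          have : s = t := hcast (by omega) (by omega) (by simpa using h)
          rwa [this] at hs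
      exact Finset.Subset.antisymm (key p p' hp hp' heq h1)
        (key p' p hp' hp heq.symm h1.symm)
    exact Prod.ext h1 h2
  · -- surjective
    intro S hS
    rw [hA, Finset.mem_filter] at hS
    obtain ⟨-, hScard, hSdiam⟩ := hS
    -- the defining set is nonempty
    have hne : {m : ℕ | ∃ a : ZMod d, S ⊆ cycInterval d a m}.Nonempty := by
      refine ⟨d, 0, fun x _ => mem_cycInterval.mpr ⟨x.val, x.val_lt, by
        rw [zero_add, hvalcast]⟩⟩
    obtain ⟨a, ha⟩ := Nat.sInf_mem hne
    -- offsets from a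
    have hoffS : ∀ x ∈ S, (x - a).val < q := by
      intro x hx
      obtain ⟨t, ht, rfl⟩ := mem_cycInterval.mp (ha hx)
      have htq : t < q := lt_of_lt_of_le ht hSdiam
      rw [add_sub_cancel_left, ZMod.val_natCast_of_lt (by omega)]
      exact htq
    have hSne : S.Nonempty := Finset.card_pos.mp (by omega)
    obtain ⟨a', ha'S, ha'min⟩ := S.exists_min_image (fun x => (x - a).val) hSne
    -- offsets from a'
    have hoffS' : ∀ x ∈ S, (x - a').val = (x - a).val - (a' - a).val := by
      intro x hx
      have h1 : (a' - a).val ≤ (x - a).val := ha'min x hx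
      have h2 : x - a' = (((x - a).val - (a' - a).val : ℕ) : ZMod d) := by
        rw [Nat.cast_sub h1, hvalcast, hvalcast]
        ring
      rw [h2, ZMod.val_natCast_of_lt]
      have := hoffS x hx
      omega
    have hoffq : ∀ x ∈ S, (x - a').val < q := by
      intro x hx
      have := hoffS' x hx
      have := hoffS x hx
      omega
    have hoffpos : ∀ x ∈ S, x ≠ a' → 1 ≤ (x - a').val := by
      intro x hx hxa
      rcases Nat.eq_zero_or_pos ((x - a').val) with h | h
      · exfalso
        apply hxa
        have : ((x - a').val : ZMod d) = ((0:ℕ) : ZMod d) := by rw [h]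
        rw [hvalcast] at this
        have : x - a' = 0 := by simpa using this
        have := sub_eq_zero.mp this
        exact this
      · exact h
    refine ⟨(a', (S.erase a').image (fun x => (x - a').val)), ?_, ?_⟩
    · rw [hB, Finset.mem_product, Finset.mem_powersetCard]
      refine ⟨Finset.mem_univ _, ?_, ?_⟩
      · intro t ht
        obtain ⟨x, hx, rfl⟩ := Finset.mem_image.mp ht
        have hxS := Finset.mem_of_mem_erase hx
        have hxa := Finset.ne_of_mem_erase hx
        have := hoffq x hxS
        have := hoffpos x hxS hxa
        rw [Finset.mem_Icc]
        omega
      · rw [Finset.card_image_of_injOn, Finset.card_erase_of_mem ha'S, hScard]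
        intro x hx y hy hxy
        have hv : (x - a').val = (y - a').val := hxy
        have : x - a' = y - a' := by
          rw [← hvalcast (x - a'), ← hvalcast (y - a'), hv]
        exact sub_left_injective this
    · rw [hf]
      simp only
      rw [Finset.image_image]
      have himg : (S.erase a').image
          ((fun t : ℕ => a' + (t : ZMod d)) ∘ fun x => (x - a').val) = S.erase a' := by
        rw [Finset.image_congr (g := id), Finset.image_id]
        intro x _
        simp only [id, Function.comp]
        rw [hvalcast]
        ring
      rw [himg, Finset.insert_erase ha'S]
end

section
/- (Downsampling does not change the matrix when the window divides evenly.) Let $d = m\omega$, $q \le d/2$, and $1 \le r \le q$ with $q + 1 - r \equiv 0 \pmod{\omega}$. Then $M^r_{\omega, \omega} = M^r_{\omega, 1}$, i.e., the matrix with downsampling $\Delta = \omega$ equals the matrix without downsampling ($\Delta = 1$). In particular, for fixed $0 \le \kappa \le \omega - 1$, $(M^r_{\omega,\omega})_{i,i+\kappa} = 1 - \kappa/\omega$. -/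
/-- The block-circulant matrix of the convolutional kernel with `ω`-local
average pooling and `Δ`-downsampling:
`M^r_{ij} = (Δ/(ω(q+1-r))) · #{(k,s,s',t) : k ∈ [d/Δ], s,s' ∈ [ω], 0 ≤ t ≤ q-r,
kΔ+s+t ≡ i, kΔ+s'+t ≡ j (mod d)}`. -/
noncomputable def Mds (d q r ω Δ : ℕ) : Matrix (ZMod d) (ZMod d) ℝ :=
  fun i j => ((Δ : ℝ) / ((ω : ℝ) * ((q + 1 - r : ℕ) : ℝ))) *
    (((Finset.Icc 1 (d / Δ) ×ˢ Finset.Icc 1 ω ×ˢ Finset.Icc 1 ω ×ˢ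
          Finset.range (q - r + 1)).filter
        (fun p : ℕ × ℕ × ℕ × ℕ =>
          ((p.1 * Δ + p.2.1 + p.2.2.2 : ℕ) : ZMod d) = i ∧
          ((p.1 * Δ + p.2.2.1 + p.2.2.2 : ℕ) : ZMod d) = j)).card : ℝ)

/-- In `[1, m]`, the residue mod `m` determines the element. -/
lemma Mds_icc_mod_inj {m k₁ k₂ : ℕ} (h₁ : 1 ≤ k₁) (h₁' : k₁ ≤ m) (h₂ : 1 ≤ k₂)
    (h₂' : k₂ ≤ m) (h : k₁ % m = k₂ % m) : k₁ = k₂ := by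
  rcases eq_or_lt_of_le h₁' with rfl | hk₁ <;> rcases eq_or_lt_of_le h₂' with h' | hk₂
  · exact h'.symm
  · rw [Nat.mod_self, Nat.mod_eq_of_lt hk₂] at h; omega
  · rw [h', Nat.mod_self, Nat.mod_eq_of_lt hk₁] at h; omega
  · rwa [Nat.mod_eq_of_lt hk₁, Nat.mod_eq_of_lt hk₂] at h

/-- The main counting lemma: the number of quadruples is `(Q/Δ)` times the
number of pairs `(s,s')` with `s' - s ≡ j - i`. -/
lemma Mds_card_F (d Q ω Δ : ℕ) [NeZero d] (hΔd : Δ ∣ d) (hΔQ : Δ ∣ Q)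
    (hΔ : 0 < Δ) (i j : ZMod d) :
    ((Finset.Icc 1 (d / Δ) ×ˢ Finset.Icc 1 ω ×ˢ Finset.Icc 1 ω ×ˢ
          Finset.range Q).filter
        (fun p : ℕ × ℕ × ℕ × ℕ =>
          ((p.1 * Δ + p.2.1 + p.2.2.2 : ℕ) : ZMod d) = i ∧
          ((p.1 * Δ + p.2.2.1 + p.2.2.2 : ℕ) : ZMod d) = j)).card
      = (Q / Δ) * (((Finset.Icc 1 ω ×ˢ Finset.Icc 1 ω).filter
          (fun p : ℕ × ℕ => ((p.2 : ZMod d) - (p.1 : ZMod d) = j - i))).card) := by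
  classical
  have hd0 : d ≠ 0 := NeZero.ne d
  have hdΔ : d / Δ * Δ = d := Nat.div_mul_cancel hΔd
  have hm' : 0 < d / Δ := Nat.div_pos (Nat.le_of_dvd (Nat.pos_of_ne_zero hd0) hΔd) hΔ
  have key : ((Finset.Icc 1 (d / Δ) ×ˢ Finset.Icc 1 ω ×ˢ Finset.Icc 1 ω ×ˢ
          Finset.range Q).filter
        (fun p : ℕ × ℕ × ℕ × ℕ =>
          ((p.1 * Δ + p.2.1 + p.2.2.2 : ℕ) : ZMod d) = i ∧
          ((p.1 * Δ + p.2.2.1 + p.2.2.2 : ℕ) : ZMod d) = j)).card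
      = (Finset.range (Q / Δ) ×ˢ ((Finset.Icc 1 ω ×ˢ Finset.Icc 1 ω).filter
          (fun p : ℕ × ℕ => ((p.2 : ZMod d) - (p.1 : ZMod d) = j - i)))).card := by
    refine Finset.card_bij (fun p _ => (p.2.2.2 / Δ, (p.2.1, p.2.2.1))) ?_ ?_ ?_
    · rintro ⟨k, s, s', t⟩ hp
      simp only [Finset.mem_filter, Finset.mem_product, Finset.mem_Icc,
        Finset.mem_range] at hp ⊢
      obtain ⟨⟨hk, hs, hs', ht⟩, h1, h2⟩ := hp
      refine ⟨Nat.div_lt_div_of_lt_of_dvd hΔQ ht, ⟨hs, hs'⟩, ?_⟩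
      rw [← h1, ← h2]; push_cast; ring
    · rintro ⟨k₁, s₁, s₁', t₁⟩ hp₁ ⟨k₂, s₂, s₂', t₂⟩ hp₂ he
      simp only [Finset.mem_filter, Finset.mem_product, Finset.mem_Icc,
        Finset.mem_range] at hp₁ hp₂
      obtain ⟨⟨hk₁, hs₁, hs₁', ht₁⟩, h1, _⟩ := hp₁
      obtain ⟨⟨hk₂, hs₂, hs₂', ht₂⟩, h1', _⟩ := hp₂
      simp only [Prod.mk.injEq] at he
      obtain ⟨hta, hs, hs'⟩ := he
      subst hs; subst hs'
      have hmod : k₁ * Δ + s₁ + t₁ ≡ k₂ * Δ + s₁ + t₂ [MOD d] := by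
        rw [← ZMod.natCast_eq_natCast_iff]; rw [h1, h1']
      -- t₁ = t₂
      have hmodΔ : t₁ ≡ t₂ [MOD Δ] := by
        have h' := hmod.of_dvd hΔd
        have h'' : t₁ + (k₁ * Δ + s₁) ≡ t₂ + (k₁ * Δ + s₁) [MOD Δ] := by
          have e1 : k₁ * Δ ≡ k₂ * Δ [MOD Δ] :=
            ((Nat.modEq_zero_iff_dvd).2 ⟨k₁, mul_comm _ _⟩).trans
              ((Nat.modEq_zero_iff_dvd).2 ⟨k₂, mul_comm _ _⟩).symm
          calc t₁ + (k₁ * Δ + s₁) = k₁ * Δ + s₁ + t₁ := by ring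
            _ ≡ k₂ * Δ + s₁ + t₂ [MOD Δ] := h'
            _ ≡ k₁ * Δ + s₁ + t₂ [MOD Δ] := by
                exact (e1.symm.add_right s₁).add_right t₂
            _ = t₂ + (k₁ * Δ + s₁) := by ring
        exact h''.add_right_cancel' _
      have ht12 : t₁ = t₂ := by
        have h1 := Nat.div_add_mod t₁ Δ
        have h2 := Nat.div_add_mod t₂ Δ
        have h3 : t₁ % Δ = t₂ % Δ := hmodΔ
        rw [hta, h3] at h1
        omega
      subst ht12
      have hk : k₁ * Δ ≡ k₂ * Δ [MOD d] := by
        have : k₁ * Δ + (s₁ + t₁) ≡ k₂ * Δ + (s₁ + t₁) [MOD d] := by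
          simpa [add_assoc] using hmod
        exact this.add_right_cancel' _
      have hkk : k₁ ≡ k₂ [MOD d / Δ] :=
        Nat.ModEq.mul_right_cancel' hΔ.ne' (by rwa [hdΔ])
      exact Prod.ext (Mds_icc_mod_inj hk₁.1 hk₁.2 hk₂.1 hk₂.2 hkk) rfl
    · rintro ⟨a, s, s'⟩ hb
      simp only [Finset.mem_filter, Finset.mem_product, Finset.mem_Icc,
        Finset.mem_range] at hb
      obtain ⟨ha, ⟨⟨hs1, hs2⟩, hs'1, hs'2⟩, hss⟩ := hb
      set x : ZMod d := i - (s : ZMod d) with hx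
      set v := x.val with hv
      set f := v % Δ with hf
      set e := v / Δ with he
      set m' := d / Δ with hm
      have hQ0 : 0 < Q := lt_of_le_of_lt (Nat.zero_le _) (lt_of_lt_of_le ha
        (Nat.div_le_self _ _))
      have haQ : a < Q := lt_of_lt_of_le ha (Nat.div_le_self _ _)
      set g := (e + m' * Q - a) % m' with hg
      set k := if g = 0 then m' else g with hk
      have hgm : g < m' := Nat.mod_lt _ hm'
      have hk1 : 1 ≤ k := by rw [hk]; split <;> omega
      have hk2 : k ≤ m' := by rw [hk]; split <;> omega
      have hkg : k % m' = g := by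
        rw [hk]; split
        · simp [Nat.mod_self]; omega
        · exact Nat.mod_eq_of_lt hgm
      set t := a * Δ + f with htdef
      have hfΔ : f < Δ := Nat.mod_lt _ hΔ
      have htQ : t < Q := by
        have h1 : a + 1 ≤ Q / Δ := ha
        have h2 : (a + 1) * Δ ≤ Q :=
          le_trans (Nat.mul_le_mul_right _ h1) (le_of_eq (Nat.div_mul_cancel hΔQ))
        calc t = a * Δ + f := htdef
          _ < (a + 1) * Δ := by
              have hexp : (a + 1) * Δ = a * Δ + Δ := by ring
              omega
          _ ≤ Q := h2
      -- key congruence: k * Δ + t ≡ v [MOD d]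
      have hcong : k * Δ + t ≡ v [MOD d] := by
        have hva : v = e * Δ + f := by
          rw [he, hf]; exact (Nat.div_add_mod' v Δ).symm
        have h1 : k + a ≡ e [MOD m'] := by
          have c1 : k + a ≡ g + a [MOD m'] := by
            have : k ≡ g [MOD m'] := by
              unfold Nat.ModEq; rw [hkg, Nat.mod_eq_of_lt hgm]
            exact this.add_right a
          have c2 : g + a ≡ (e + m' * Q - a) + a [MOD m'] :=
            (Nat.mod_modEq _ _).add_right a
          have hmQ : Q ≤ m' * Q := Nat.le_mul_of_pos_left Q hm'
          have c3 : (e + m' * Q - a) + a = e + m' * Q :=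
            Nat.sub_add_cancel (le_trans haQ.le (hmQ.trans (Nat.le_add_left _ _)))
          have c4 : e + m' * Q ≡ e + 0 [MOD m'] :=
            Nat.ModEq.add_left e ((Nat.modEq_zero_iff_dvd).2 ⟨Q, rfl⟩)
          have := (c1.trans c2)
          rw [c3] at this
          simpa using this.trans c4
        have hmul : (k + a) * Δ ≡ e * Δ [MOD m' * Δ] := h1.mul_right' Δ
        have h2 : (k + a) * Δ + f ≡ e * Δ + f [MOD m' * Δ] := hmul.add_right f
        rw [hdΔ] at h2
        calc k * Δ + t = (k + a) * Δ + f := by rw [htdef]; ring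
          _ ≡ e * Δ + f [MOD d] := h2
          _ = v := hva.symm
      have hcast : ((k * Δ + t : ℕ) : ZMod d) = x := by
        rw [(ZMod.natCast_eq_natCast_iff _ _ _).2 hcong, hv,
          ZMod.natCast_zmod_val]
      refine ⟨(k, s, s', t), ?_, ?_⟩
      · simp only [Finset.mem_filter, Finset.mem_product, Finset.mem_Icc,
          Finset.mem_range]
        refine ⟨⟨⟨hk1, hk2⟩, ⟨hs1, hs2⟩, ⟨hs'1, hs'2⟩, htQ⟩, ?_, ?_⟩
        · push_cast
          push_cast at hcast
          rw [hx] at hcast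
          linear_combination hcast
        · push_cast
          push_cast at hcast
          rw [hx] at hcast
          linear_combination hcast + hss
      · have htdiv : t / Δ = a := by
          rw [htdef, add_comm, Nat.add_mul_div_right _ _ hΔ,
            Nat.div_eq_of_lt hfΔ, zero_add]
        simp [htdiv]
  rw [key, Finset.card_product, Finset.card_range]

/-- Counting the pairs: `#{(s,s') ∈ [1,ω]² : s' - s ≡ κ [d]} = ω - κ`. -/
lemma Mds_card_pairs (d ω κ : ℕ) [NeZero d] (h2 : 2 * ω ≤ d) (hω : 0 < ω)
    (hκ : κ ≤ ω - 1) :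
    (((Finset.Icc 1 ω ×ˢ Finset.Icc 1 ω).filter
        (fun p : ℕ × ℕ => ((p.2 : ZMod d) - (p.1 : ZMod d) = (κ : ZMod d))))).card
      = ω - κ := by
  classical
  have hd0 : d ≠ 0 := NeZero.ne d
  have hset : ((Finset.Icc 1 ω ×ˢ Finset.Icc 1 ω).filter
        (fun p : ℕ × ℕ => ((p.2 : ZMod d) - (p.1 : ZMod d) = (κ : ZMod d))))
      = (Finset.Icc 1 (ω - κ)).image (fun s => (s, s + κ)) := by
    ext ⟨s, s'⟩
    simp only [Finset.mem_filter, Finset.mem_product, Finset.mem_Icc,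
      Finset.mem_image, Prod.mk.injEq]
    constructor
    · rintro ⟨⟨⟨hs1, hs2⟩, hs'1, hs'2⟩, h⟩
      have hcast : ((s' : ℕ) : ZMod d) = ((s + κ : ℕ) : ZMod d) := by
        push_cast
        linear_combination h
      have hmod : s' % d = (s + κ) % d := (ZMod.natCast_eq_natCast_iff _ _ _).1 hcast
      rw [Nat.mod_eq_of_lt (by omega), Nat.mod_eq_of_lt (by omega)] at hmod
      exact ⟨s, ⟨hs1, by omega⟩, rfl, by omega⟩
    · rintro ⟨a, ⟨ha1, ha2⟩, rfl, rfl⟩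
      refine ⟨⟨⟨ha1, by omega⟩, by omega, by omega⟩, ?_⟩
      push_cast
      ring
  rw [hset, Finset.card_image_of_injective _
      (fun a b hab => (Prod.ext_iff.1 hab).1), Nat.card_Icc]
  omega

/-- If `ω ∣ q + 1 - r` then downsampling by `Δ = ω` does not modify the
matrix: `M^r_{ω,ω} = M^r_{ω,1}`; in particular
`(M^r_{ω,ω})_{i,i+κ} = 1 - κ/ω` for `0 ≤ κ ≤ ω - 1`. -/
theorem Mds_downsampling_eq (d q r m ω : ℕ) [NeZero d] (hd : d = m * ω)
    (hq : 2 * q ≤ d) (hr1 : 1 ≤ r) (hrq : r ≤ q) (hω : 1 ≤ ω)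
    (hdvd : ω ∣ (q + 1 - r)) :
    Mds d q r ω ω = Mds d q r ω 1 ∧
    ∀ (i : ZMod d) (κ : ℕ), κ ≤ ω - 1 →
      Mds d q r ω ω i (i + (κ : ZMod d)) = 1 - (κ : ℝ) / ω := by
  have hd0 : d ≠ 0 := NeZero.ne d
  have hQeq : q + 1 - r = q - r + 1 := by omega
  set Q := q - r + 1 with hQdef
  have hωd : ω ∣ d := ⟨m, by rw [hd, mul_comm]⟩
  have hωQ : ω ∣ Q := by rwa [hQeq] at hdvd
  have hQpos : 0 < Q := Nat.succ_pos _
  have hωQ' : ω ≤ Q := Nat.le_of_dvd hQpos hωQ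
  have hQq : Q ≤ q := by omega
  have h2ω : 2 * ω ≤ d := by omega
  have hω0 : (ω : ℝ) ≠ 0 := Nat.cast_ne_zero.2 (by omega)
  have hQ0 : (Q : ℝ) ≠ 0 := Nat.cast_ne_zero.2 hQpos.ne'
  have entry : ∀ (Δ : ℕ), Δ ∣ d → Δ ∣ Q → 0 < Δ → ∀ i j : ZMod d,
      Mds d q r ω Δ i j = (((Finset.Icc 1 ω ×ˢ Finset.Icc 1 ω).filter
          (fun p : ℕ × ℕ => ((p.2 : ZMod d) - (p.1 : ZMod d) = j - i))).card : ℝ) / ω := by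
    intro Δ hΔd hΔQ hΔ i j
    have hΔ0 : (Δ : ℝ) ≠ 0 := Nat.cast_ne_zero.2 hΔ.ne'
    have hc := Mds_card_F d Q ω Δ hΔd hΔQ hΔ i j
    simp only [Mds, hQeq, ← hQdef]
    rw [hc, Nat.cast_mul, Nat.cast_div hΔQ hΔ0]
    field_simp
  constructor
  · funext i j
    rw [entry ω hωd hωQ (by omega) i j, entry 1 (one_dvd _) (one_dvd _) one_pos i j]
  · intro i κ hκ
    rw [entry ω hωd hωQ (by omega) i (i + κ)]
    have : (i + (κ : ZMod d)) - i = (κ : ZMod d) := by ring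
    rw [this, Mds_card_pairs d ω κ h2ω (by omega) hκ]
    rw [Nat.cast_sub (by omega)]
    field_simp
end

section
/- (Decomposition of the NTK second term.) Let $\sigma': \{-1,1\}^q$-inner-product function have Gegenbauer expansion $\sigma'(\langle u, v\rangle/\sqrt{q}) = \sum_{\ell=0}^q \kappa_{q,\ell} \binom{q}{\ell} Q^{(q)}_\ell(\langle u,v\rangle)$. Then $\mathbb{E}_{w \sim \mathrm{Unif}(\{-1,1\}^q)}[\sigma'(\langle u, w\rangle/\sqrt{q}) \sigma'(\langle v, w\rangle/\sqrt{q})] \cdot \langle u, v\rangle / q = \sum_{\ell=0}^q \zeta_{q,\ell}^2 \binom{q}{\ell} Q^{(q)}_\ell(\langle u, v\rangle)$ where $\zeta_{q,\ell}^2 = \frac{\ell}{q}\kappa_{q,\ell-1}^2 + \frac{q-\ell}{q}\kappa_{q,\ell+1}^2$ (with $\kappa_{q,-1} = \kappa_{q,q+1} = 0$). -/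
/-- The ±1 value of a boolean coordinate. -/
def pm (b : Bool) : ℝ := if b then 1 else -1

/-- Fourier character `Y_S(x) = ∏_{i ∈ S} x_i` on the hypercube. -/
def Y {n : Type*} [DecidableEq n] (S : Finset n) (x : n → Bool) : ℝ :=
  ∏ i ∈ S, pm (x i)

/-- Inner product `⟨x, y⟩ = ∑ i, x_i y_i` on the hypercube. -/
def ip {n : Type*} [Fintype n] (x y : n → Bool) : ℝ :=
  ∑ i, pm (x i) * pm (y i)

/-- Hypercubic Gegenbauer polynomial
`Q^{(q)}_ℓ(⟨x,y⟩) = C(q,ℓ)⁻¹ ∑_{|S|=ℓ} Y_S(x) Y_S(y)`. -/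
noncomputable def Qg (q ℓ : ℕ) (x y : Fin q → Bool) : ℝ :=
  ((q.choose ℓ : ℝ))⁻¹ *
    ∑ S ∈ Finset.powersetCard ℓ (Finset.univ : Finset (Fin q)), Y S x * Y S y

lemma pm_sq (b : Bool) : pm b * pm b = 1 := by cases b <;> simp [pm]

lemma Y_eq_prod (q : ℕ) (S : Finset (Fin q)) (x : Fin q → Bool) :
    Y S x = ∏ i, (if i ∈ S then pm (x i) else 1) := by
  rw [Y, Finset.prod_ite_mem, Finset.univ_inter]

/-- orthogonality -/
lemma sum_Y_mul_Y (q : ℕ) (S T : Finset (Fin q)) :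
    ∑ w : Fin q → Bool, Y S w * Y T w = if S = T then (2:ℝ)^q else 0 := by
  have h1 : ∀ w : Fin q → Bool, Y S w * Y T w
      = ∏ i, ((if i ∈ S then pm (w i) else 1) * (if i ∈ T then pm (w i) else 1)) := by
    intro w
    rw [Finset.prod_mul_distrib, ← Y_eq_prod, ← Y_eq_prod]
  simp_rw [h1]
  have h2 : (Finset.univ : Finset (Fin q → Bool)) =
      Fintype.piFinset (fun _ => (Finset.univ : Finset Bool)) :=
    (Fintype.piFinset_univ).symm
  rw [h2,
    ← Finset.prod_univ_sum (fun _ : Fin q => (Finset.univ : Finset Bool))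
      (fun i b => (if i ∈ S then pm b else 1) * (if i ∈ T then pm b else 1))]
  have h3 : ∀ i : Fin q, (∑ b : Bool, (if i ∈ S then pm b else 1) * (if i ∈ T then pm b else 1))
      = if (i ∈ S ↔ i ∈ T) then 2 else 0 := by
    intro i
    by_cases hS : i ∈ S <;> by_cases hT : i ∈ T <;> simp [hS, hT, pm, Fintype.sum_bool] <;> norm_num
  simp_rw [h3]
  by_cases h : S = T
  · subst h; simp [Finset.prod_const]
  · rw [if_neg h]
    obtain ⟨i, hi⟩ : ∃ i, ¬(i ∈ S ↔ i ∈ T) := by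
      by_contra hc
      push_neg at hc
      exact h (Finset.ext fun i => hc i)
    exact Finset.prod_eq_zero (Finset.mem_univ i) (by simp [hi])

def flip' (q : ℕ) (i : Fin q) (S : Finset (Fin q)) : Finset (Fin q) :=
  if i ∈ S then S.erase i else insert i S

lemma flip'_flip' (q : ℕ) (i : Fin q) (S : Finset (Fin q)) :
    flip' q i (flip' q i S) = S := by
  unfold flip'
  by_cases h : i ∈ S
  · simp [h, Finset.insert_erase h]
  · simp [h, Finset.erase_insert h]

lemma card_flip' (q : ℕ) (i : Fin q) (S : Finset (Fin q)) :
    (flip' q i S).card = if i ∈ S then S.card - 1 else S.card + 1 := by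
  unfold flip'
  by_cases h : i ∈ S
  · simp [h, Finset.card_erase_of_mem h]
  · simp [h, Finset.card_insert_of_notMem h]

lemma Y_mul_pm (q : ℕ) (i : Fin q) (S : Finset (Fin q)) (x : Fin q → Bool) :
    Y S x * pm (x i) = Y (flip' q i S) x := by
  unfold flip' Y
  by_cases h : i ∈ S
  · rw [if_pos h, ← Finset.mul_prod_erase S _ h, mul_comm (pm (x i)), mul_assoc, pm_sq, mul_one]
  · rw [if_neg h, Finset.prod_insert h, mul_comm]

/-- expansion of σ' as a sum over all subsets -/
lemma sigma_expand (q : ℕ) (σ' : ℝ → ℝ) (κ : ℕ → ℝ)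
    (x y : Fin q → Bool)
    (h : σ' (ip x y / Real.sqrt q) =
        ∑ ℓ ∈ Finset.range (q + 1), κ ℓ * (q.choose ℓ : ℝ) * Qg q ℓ x y) :
    σ' (ip x y / Real.sqrt q) =
      ∑ S ∈ (Finset.univ : Finset (Fin q)).powerset, κ S.card * (Y S x * Y S y) := by
  rw [h, Finset.sum_powerset]
  rw [show ((Finset.univ : Finset (Fin q)).card) = q by simp]
  refine Finset.sum_congr rfl fun ℓ hℓ => ?_
  rw [Finset.mem_range] at hℓ
  have hch : (q.choose ℓ : ℝ) ≠ 0 :=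
    Nat.cast_ne_zero.mpr (Nat.choose_pos (Nat.lt_succ_iff.mp hℓ)).ne'
  rw [Qg, mul_assoc, ← mul_assoc (q.choose ℓ : ℝ), mul_inv_cancel₀ hch, one_mul,
    Finset.mul_sum]
  refine Finset.sum_congr rfl fun S hS => ?_
  rw [(Finset.mem_powersetCard.mp hS).2]

/-- generic expansion of `∑ ℓ c ℓ * C(q,ℓ) * Qg` as a sum over subsets -/
lemma expand_coeff (q : ℕ) (c : ℕ → ℝ) (x y : Fin q → Bool) :
    ∑ ℓ ∈ Finset.range (q + 1), c ℓ * (q.choose ℓ : ℝ) * Qg q ℓ x y =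
      ∑ S ∈ (Finset.univ : Finset (Fin q)).powerset, c S.card * (Y S x * Y S y) := by
  rw [Finset.sum_powerset]
  rw [show ((Finset.univ : Finset (Fin q)).card) = q by simp]
  refine Finset.sum_congr rfl fun ℓ hℓ => ?_
  rw [Finset.mem_range] at hℓ
  have hch : (q.choose ℓ : ℝ) ≠ 0 :=
    Nat.cast_ne_zero.mpr (Nat.choose_pos (Nat.lt_succ_iff.mp hℓ)).ne'
  rw [Qg, mul_assoc, ← mul_assoc (q.choose ℓ : ℝ), mul_inv_cancel₀ hch, one_mul,
    Finset.mul_sum]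
  refine Finset.sum_congr rfl fun S hS => ?_
  rw [(Finset.mem_powersetCard.mp hS).2]

/-- Decomposition of the NTK second term: if
`σ'(⟨u,v⟩/√q) = ∑_{ℓ=0}^q κ_{q,ℓ} C(q,ℓ) Q_ℓ(⟨u,v⟩)`, then
`𝔼_w[σ'(⟨u,w⟩/√q)σ'(⟨v,w⟩/√q)]·⟨u,v⟩/q
  = ∑_{ℓ=0}^q ζ_{q,ℓ}² C(q,ℓ) Q_ℓ(⟨u,v⟩)` where
`ζ_{q,ℓ}² = (ℓ/q)κ_{q,ℓ-1}² + ((q-ℓ)/q)κ_{q,ℓ+1}²`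
(with the conventions `κ_{q,-1} = κ_{q,q+1} = 0`, both irrelevant here since
the corresponding coefficients vanish). -/
theorem ntk_second_term_decomposition (q : ℕ) (hq : 1 ≤ q)
    (σ' : ℝ → ℝ) (κ : ℕ → ℝ)
    (hexp : ∀ u v : Fin q → Bool,
      σ' (ip u v / Real.sqrt q) =
        ∑ ℓ ∈ Finset.range (q + 1), κ ℓ * (q.choose ℓ : ℝ) * Qg q ℓ u v)
    (u v : Fin q → Bool) :
    ((∑ w : Fin q → Bool,
        σ' (ip u w / Real.sqrt q) * σ' (ip v w / Real.sqrt q)) / 2 ^ q) *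
        (ip u v / q) =
      ∑ ℓ ∈ Finset.range (q + 1),
        ((ℓ : ℝ) / q * (κ (ℓ - 1)) ^ 2 +
            ((q : ℝ) - ℓ) / q * (κ (ℓ + 1)) ^ 2) *
          (q.choose ℓ : ℝ) * Qg q ℓ u v := by
  set P := (Finset.univ : Finset (Fin q)).powerset with hP
  have hq0 : (q : ℝ) ≠ 0 := Nat.cast_ne_zero.mpr (by omega)
  -- Step 1: expectation
  have hE : (∑ w : Fin q → Bool,
        σ' (ip u w / Real.sqrt q) * σ' (ip v w / Real.sqrt q))
      = 2 ^ q * ∑ S ∈ P, κ S.card ^ 2 * (Y S u * Y S v) := by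
    have h1 : ∀ w : Fin q → Bool,
        σ' (ip u w / Real.sqrt q) * σ' (ip v w / Real.sqrt q)
        = ∑ S ∈ P, ∑ T ∈ P,
            (κ S.card * Y S u * (κ T.card * Y T v)) * (Y S w * Y T w) := by
      intro w
      rw [hexp u w, hexp v w, expand_coeff, expand_coeff, Finset.sum_mul_sum]
      exact Finset.sum_congr rfl fun S _ => Finset.sum_congr rfl fun T _ => by ring
    simp_rw [h1]
    rw [Finset.sum_comm]
    rw [Finset.mul_sum]
    refine Finset.sum_congr rfl fun S hS => ?_
    rw [Finset.sum_comm]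
    have h2 : ∀ T ∈ P, ∑ w : Fin q → Bool,
        (κ S.card * Y S u * (κ T.card * Y T v)) * (Y S w * Y T w)
        = if S = T then (κ S.card * Y S u * (κ T.card * Y T v)) * 2 ^ q else 0 := by
      intro T _
      rw [← Finset.mul_sum, sum_Y_mul_Y, mul_ite, mul_zero]
    rw [Finset.sum_congr rfl h2, Finset.sum_ite_eq P S
      (fun T => (κ S.card * Y S u * (κ T.card * Y T v)) * 2 ^ q), if_pos hS]
    ring
  -- Step 2: reduce LHS to a sum over subsets
  have h2q : ((2 : ℝ) ^ q) ≠ 0 := by positivity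
  rw [hE, mul_comm ((2:ℝ)^q), mul_div_assoc, div_self h2q, mul_one]
  -- Step 3: expand RHS
  rw [expand_coeff]
  -- Step 4: the combinatorial identity
  have key : (∑ S ∈ P, κ S.card ^ 2 * (Y S u * Y S v)) * ip u v
      = ∑ S ∈ P, ((S.card : ℝ) * κ (S.card - 1) ^ 2
          + ((q : ℝ) - S.card) * κ (S.card + 1) ^ 2) * (Y S u * Y S v) := by
    rw [ip, Finset.sum_mul_sum]
    have h3 : ∀ S ∈ P, ∀ i : Fin q,
        κ S.card ^ 2 * (Y S u * Y S v) * (pm (u i) * pm (v i))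
        = κ S.card ^ 2 * (Y (flip' q i S) u * Y (flip' q i S) v) := by
      intro S _ i
      rw [← Y_mul_pm, ← Y_mul_pm]
      ring
    calc ∑ S ∈ P, ∑ i : Fin q,
            κ S.card ^ 2 * (Y S u * Y S v) * (pm (u i) * pm (v i))
        = ∑ i : Fin q, ∑ S ∈ P,
            κ S.card ^ 2 * (Y (flip' q i S) u * Y (flip' q i S) v) := by
          rw [Finset.sum_comm]
          exact Finset.sum_congr rfl fun i _ =>
            Finset.sum_congr rfl fun S hS => h3 S hS i
      _ = ∑ i : Fin q, ∑ S ∈ P,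
            κ (flip' q i S).card ^ 2 * (Y S u * Y S v) := by
          refine Finset.sum_congr rfl fun i _ => ?_
          refine Finset.sum_nbij' (fun S => flip' q i S) (fun S => flip' q i S)
            (fun S _ => Finset.mem_powerset.mpr (Finset.subset_univ _))
            (fun S _ => Finset.mem_powerset.mpr (Finset.subset_univ _))
            (fun S _ => flip'_flip' q i S) (fun S _ => flip'_flip' q i S)
            (fun S _ => ?_)
          rw [flip'_flip']
      _ = ∑ S ∈ P, ((S.card : ℝ) * κ (S.card - 1) ^ 2
            + ((q : ℝ) - S.card) * κ (S.card + 1) ^ 2) * (Y S u * Y S v) := by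
          rw [Finset.sum_comm]
          refine Finset.sum_congr rfl fun S hS => ?_
          rw [← Finset.sum_mul]
          congr 1
          have h4 : ∀ i : Fin q, κ (flip' q i S).card ^ 2
              = if i ∈ S then κ (S.card - 1) ^ 2 else κ (S.card + 1) ^ 2 := by
            intro i
            rw [card_flip']
            by_cases h : i ∈ S <;> simp [h]
          simp_rw [h4]
          have hcard : S.card ≤ q := by
            simpa using Finset.card_le_card (Finset.mem_powerset.mp hS)
          rw [Finset.sum_ite, Finset.sum_const, Finset.sum_const,
            nsmul_eq_mul, nsmul_eq_mul]
          have e1 : (Finset.univ.filter (fun x => x ∈ S)).card = S.card := by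
            simp [Finset.filter_mem_eq_inter]
          have e2 : ((Finset.univ.filter (fun x => x ∉ S)).card : ℝ)
              = (q : ℝ) - S.card := by
            have h5 : Finset.univ.filter (fun x => x ∉ S) = Sᶜ := by
              ext x; simp
            rw [h5, Finset.card_compl, Fintype.card_fin,
              Nat.cast_sub hcard]
          rw [e1, e2]
  -- Step 5: finish by dividing by q
  have goal2 : (∑ S ∈ P, κ S.card ^ 2 * (Y S u * Y S v)) * (ip u v / q)
      = ∑ S ∈ P, ((S.card : ℝ) / q * κ (S.card - 1) ^ 2
          + ((q : ℝ) - S.card) / q * κ (S.card + 1) ^ 2) * (Y S u * Y S v) := by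
    rw [← mul_div_assoc, key, Finset.sum_div]
    exact Finset.sum_congr rfl fun S _ => by field_simp
  rw [goal2]
end
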